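/- arXiv:1809.10420 — 6 statements merged into one kernel-verified Lean document; each statement's English description precedes it below -/
import Mathlib

section
/- Every Burstin basis is a Bernstein set. That is, if B ⊆ ℝ is a Hamel basis (a maximal ℚ-linearly independent subset of ℝ viewed as a vector space over ℚ) that meets every perfect subset of ℝ, then for every perfect set P ⊆ ℝ we have B ∩ P ≠ ∅ and (ℝ \ B) ∩ P ≠ ∅. -/
open Filter

lemma perfect_smul_two {P : Set ℝ} (hP : Perfect P) :
    Perfect ((fun x : ℝ => 2 * x) '' P) := by
  have hinj : Function.Injective (fun x : ℝ => 2 * x) :=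
    fun a b h => by simpa using h
  constructor
  · exact (Homeomorph.isClosedEmbedding
      (Homeomorph.mulLeft₀ (2:ℝ) two_ne_zero)).isClosed_iff_image_isClosed.mp hP.closed
  · rintro y ⟨x, hx, rfl⟩
    have := (hP.acc x hx).map (f := fun x : ℝ => 2 * x)
      (continuous_const.mul continuous_id).continuousAt hinj
    simpa [Filter.map_principal] using this

/-- Every Burstin basis (a Hamel basis of `ℝ` over `ℚ` meeting every nonempty
perfect set) is a Bernstein set. -/
theorem burstin_basis_is_bernstein (B : Set ℝ)
    (hind : LinearIndependent ℚ ((↑) : B → ℝ))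
    (hspan : Submodule.span ℚ B = ⊤)
    (hmeets : ∀ P : Set ℝ, Perfect P → P.Nonempty → (B ∩ P).Nonempty) :
    ∀ P : Set ℝ, Perfect P → P.Nonempty →
      (B ∩ P).Nonempty ∧ (Bᶜ ∩ P).Nonempty := by
  intro P hP hPne
  refine ⟨hmeets P hP hPne, ?_⟩
  obtain ⟨b, hbB, p, hpP, hbp⟩ := hmeets _ (perfect_smul_two hP) (hPne.image _)
  refine ⟨p, ?_, hpP⟩
  intro hpB
  have hbp' : 2 * p = b := hbp
  -- b = 2 * p, both in B
  have h0 : (0:ℝ) ∉ B := fun h => hind.ne_zero ⟨0, h⟩ rfl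
  by_cases hbpeq : b = p
  · have : p = 0 := by nlinarith [hbp', hbpeq]
    exact h0 (this ▸ hpB)
  · set bb : B := ⟨b, hbB⟩
    set pp : B := ⟨p, hpB⟩
    have hne : bb ≠ pp := fun h => hbpeq (congrArg Subtype.val h)
    have hf := linearIndependent_iff.mp hind
      (Finsupp.single bb 1 + Finsupp.single pp (-2)) ?_
    · have := DFunLike.congr_fun hf bb
      simp [Finsupp.single_apply, hne, Ne.symm hne] at this
    · rw [map_add]
      simp only [Finsupp.linearCombination_single]
      show (1:ℚ) • b + (-2:ℚ) • p = 0
      push_cast [Rat.smul_def]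
      linarith [hbp']
end

section
/- Assuming the continuum hypothesis (2^ℵ₀ = ℵ₁) and the axiom of choice, there exists a Sierpiński set: an uncountable set S ⊆ ℝ such that S ∩ N is countable for every Lebesgue null set N ⊆ ℝ. -/
open Cardinal Set MeasureTheory

lemma mk_isOpen_le_continuum : #{s : Set ℝ | IsOpen s} ≤ 𝔠 := by
  classical
  have hbasis := TopologicalSpace.isBasis_countableBasis ℝ
  have hcount : (TopologicalSpace.countableBasis ℝ).Countable :=
    TopologicalSpace.countable_countableBasis ℝ
  set B := TopologicalSpace.countableBasis ℝ with hB
  have hinj : Function.Injective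
      (fun s : {s : Set ℝ // IsOpen s} => {b : B | (b : Set ℝ) ⊆ s.1}) := by
    intro u v huv
    have hsets : {s | s ∈ B ∧ s ⊆ u.1} = {s | s ∈ B ∧ s ⊆ v.1} := by
      ext t
      simp only [mem_setOf_eq]
      constructor
      · rintro ⟨htB, hts⟩
        exact ⟨htB, (Set.ext_iff.1 huv ⟨t, htB⟩).1 hts⟩
      · rintro ⟨htB, hts⟩
        exact ⟨htB, (Set.ext_iff.1 huv ⟨t, htB⟩).2 hts⟩
    apply Subtype.ext
    rw [hbasis.open_eq_sUnion' u.2, hbasis.open_eq_sUnion' v.2]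
    exact congrArg _ hsets
  calc #{s : Set ℝ | IsOpen s} ≤ #(Set B) := mk_le_of_injective hinj
    _ = 2 ^ #B := mk_set
    _ ≤ 2 ^ ℵ₀ := by
        apply power_le_power_left two_ne_zero
        exact (mk_le_aleph0_iff.2 hcount.to_subtype)
    _ = 𝔠 := two_power_aleph0

lemma mk_measurableSet_real_le_continuum : #{t : Set ℝ | MeasurableSet t} ≤ 𝔠 := by
  have h : (inferInstance : MeasurableSpace ℝ) =
      MeasurableSpace.generateFrom {s : Set ℝ | IsOpen s} := by
    rw [BorelSpace.measurable_eq (α := ℝ)]; rfl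
  have h2 : {t : Set ℝ | MeasurableSet t} =
      {t : Set ℝ | @MeasurableSet ℝ (MeasurableSpace.generateFrom {s : Set ℝ | IsOpen s}) t} := by
    rw [← h]
  rw [h2]
  exact MeasurableSpace.cardinal_measurableSet_le_continuum mk_isOpen_le_continuum

/-- Under CH there is a Sierpiński set: an uncountable set of reals meeting
every Lebesgue null set in a countable set. -/
theorem exists_sierpinski_set (hCH : Cardinal.continuum = Cardinal.aleph 1) :
    ∃ S : Set ℝ, ¬ S.Countable ∧
      ∀ N : Set ℝ, MeasureTheory.volume N = 0 → (S ∩ N).Countable := by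
  classical
  -- transfer CH down to universe 0
  have hCH0 : Cardinal.continuum.{0} = Cardinal.aleph 1 := by
    apply Cardinal.lift_injective
    rw [lift_continuum, lift_aleph, Ordinal.lift_one]
    exact hCH
  -- the index type: a well-order of type ω₁
  set O := (Cardinal.aleph 1).ord.ToType with hO
  have hmkO : #O = Cardinal.aleph 1 := mk_ord_toType _
  -- the type of measurable null sets
  set T := {t : Set ℝ // MeasurableSet t ∧ volume t = 0} with hT
  have hTne : Nonempty T := ⟨⟨∅, MeasurableSet.empty, measure_empty⟩⟩
  have hmkT : #T ≤ #O := by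
    rw [hmkO, ← hCH0]
    refine le_trans ?_ mk_measurableSet_real_le_continuum
    exact mk_le_mk_of_subset (fun t ht => ht.1)
  obtain ⟨e⟩ := Cardinal.le_def _ _ |>.1 hmkT
  -- an enumeration of measurable null sets indexed by O
  set n : O → Set ℝ := fun a => ((Function.invFun e a : T) : Set ℝ) with hn
  have hn_null : ∀ a, volume (n a) = 0 := fun a => (Function.invFun e a).2.2
  have hn_surj : ∀ t : T, ∃ a, n a = (t : Set ℝ) := by
    intro t
    obtain ⟨a, ha⟩ := Function.invFun_surjective e.injective t
    exact ⟨a, by rw [hn]; simp [ha]⟩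
  -- Iio a is countable for each a : O
  have hIio : ∀ a : O, (Iio a).Countable := by
    intro a
    rw [countable_iff_lt_aleph_one]
    exact mk_Iio_ord_toType a
  -- at each stage we can choose a point avoiding all previous null sets and points
  have key : ∀ (a : O) (ih : ∀ b, b < a → ℝ),
      ∃ x : ℝ, x ∉ ((⋃ b : Iio a, n b) ∪ (⋃ b : Iio a, {ih b b.2})) := by
    intro a ih
    have : Countable (Iio a) := (hIio a).to_subtype
    have h1 : volume (⋃ b : Iio a, n b) = 0 :=
      measure_iUnion_null fun b => hn_null b
    have h2 : volume (⋃ b : Iio a, ({ih b b.2} : Set ℝ)) = 0 :=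
      measure_iUnion_null fun b => measure_singleton _
    have h3 : volume ((⋃ b : Iio a, n b) ∪ (⋃ b : Iio a, {ih b b.2})) = 0 :=
      le_antisymm (le_trans (measure_union_le _ _) (by rw [h1, h2]; simp)) zero_le
    by_contra h
    push_neg at h
    have heq : ((⋃ b : Iio a, n b) ∪ (⋃ b : Iio a, {ih b b.2})) = Set.univ :=
      eq_univ_of_forall h
    rw [heq] at h3
    simp [Real.volume_univ] at h3
  -- recursive construction
  set x : O → ℝ := IsWellFounded.fix (· < ·) (fun a ih => (key a ih).choose) with hx
  have hx_spec : ∀ a : O,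
      x a ∉ ((⋃ b : Iio a, n b) ∪ (⋃ b : Iio a, {x b})) := by
    intro a
    rw [hx]
    rw [IsWellFounded.fix_eq]
    exact (key a fun b _ => IsWellFounded.fix (· < ·) (fun a ih => (key a ih).choose) b).choose_spec
  have hx_not_null : ∀ a b : O, b < a → x a ∉ n b := by
    intro a b hba h
    exact hx_spec a (Or.inl (mem_iUnion.2 ⟨⟨b, hba⟩, h⟩))
  have hx_ne : ∀ a b : O, b < a → x a ≠ x b := by
    intro a b hba h
    exact hx_spec a (Or.inr (mem_iUnion.2 ⟨⟨b, hba⟩, by simp [h]⟩))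
  have hx_inj : Function.Injective x := by
    intro a b hab
    rcases lt_trichotomy a b with h | h | h
    · exact absurd hab.symm (hx_ne b a h)
    · exact h
    · exact absurd hab (hx_ne a b h)
  refine ⟨range x, ?_, ?_⟩
  · intro hc
    rw [countable_iff_lt_aleph_one, mk_range_eq _ hx_inj, hmkO] at hc
    exact lt_irrefl _ hc
  · intro N hN
    obtain ⟨M, hNM, hMmeas, hM0⟩ := exists_measurable_superset_of_null hN
    obtain ⟨a, ha⟩ := hn_surj ⟨M, hMmeas, hM0⟩
    have hsub : range x ∩ N ⊆ x '' (Iic a) := by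
      rintro y ⟨⟨b, rfl⟩, hyN⟩
      refine ⟨b, ?_, rfl⟩
      by_contra hba
      rw [mem_Iic, not_le] at hba
      exact hx_not_null b a hba (by rw [ha]; exact hNM hyN)
    have hIic : (Iic a).Countable := by
      have h' : Iic a = Iio a ∪ {a} := by
        ext z; simp [le_iff_lt_or_eq]
      rw [h']
      exact (hIio a).union (countable_singleton a)
    exact (hIic.image x).mono hsub
end

section
/- Assuming the continuum hypothesis and the axiom of choice, there exists a Luzin set: an uncountable set Λ ⊆ ℝ such that Λ ∩ M is countable for every meager set M ⊆ ℝ. -/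
open Cardinal Set Function

namespace LuzinAux

noncomputable section

/-- The index type: a well-order of order type `ω₁`. -/
abbrev W : Type := (Cardinal.aleph 1).ord.ToType

lemma countable_Iio (a : W) : (Set.Iio a).Countable :=
  (Cardinal.countable_iff_lt_aleph_one _).2 (Cardinal.mk_Iio_ord_toType a)

lemma countable_Iic (a : W) : (Set.Iic a).Countable := by
  rw [← Set.Iio_insert]
  exact (countable_Iio a).insert a

lemma mk_W : #W = Cardinal.aleph 1 := by
  rw [Cardinal.mk_toType, Cardinal.card_ord]

/-- There are at most continuum many closed subsets of `ℝ`. -/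
lemma mk_closed_le : #{C : Set ℝ // IsClosed C} ≤ Cardinal.continuum := by
  have key : ∀ C D : {C : Set ℝ // IsClosed C},
      {p : ℚ × ℚ | Set.Ioo (p.1 : ℝ) p.2 ⊆ (C : Set ℝ)ᶜ} ⊆
        {p : ℚ × ℚ | Set.Ioo (p.1 : ℝ) p.2 ⊆ (D : Set ℝ)ᶜ} →
      (C : Set ℝ)ᶜ ⊆ (D : Set ℝ)ᶜ := by
    rintro ⟨C, hC⟩ ⟨D, hD⟩ hsub x hx
    obtain ⟨ε, hε, hball⟩ := Metric.isOpen_iff.1 hC.isOpen_compl x hx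
    rw [Real.ball_eq_Ioo] at hball
    obtain ⟨q, hq1, hq2⟩ := exists_rat_btwn (show x - ε < x by linarith)
    obtain ⟨r, hr1, hr2⟩ := exists_rat_btwn (show x < x + ε by linarith)
    have hmem : (q, r) ∈ {p : ℚ × ℚ | Set.Ioo (p.1 : ℝ) p.2 ⊆ Cᶜ} :=
      fun y hy => hball ⟨lt_trans hq1 hy.1, lt_trans hy.2 hr2⟩
    exact hsub hmem ⟨hq2, hr1⟩
  have hinj : Function.Injective (fun C : {C : Set ℝ // IsClosed C} =>
      ({p : ℚ × ℚ | Set.Ioo (p.1 : ℝ) p.2 ⊆ (C : Set ℝ)ᶜ} : Set (ℚ × ℚ))) := by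
    intro C D h
    have h1 : (C : Set ℝ)ᶜ ⊆ (D : Set ℝ)ᶜ := key C D h.le
    have h2 : (D : Set ℝ)ᶜ ⊆ (C : Set ℝ)ᶜ := key D C h.ge
    have : (C : Set ℝ) = (D : Set ℝ) := compl_injective (le_antisymm h1 h2)
    exact Subtype.ext this
  calc #{C : Set ℝ // IsClosed C} ≤ #(Set (ℚ × ℚ)) := Cardinal.mk_le_of_injective hinj
    _ = 2 ^ #(ℚ × ℚ) := Cardinal.mk_set
    _ = 2 ^ Cardinal.aleph0 := by rw [Cardinal.mk_denumerable]
    _ = Cardinal.continuum := Cardinal.two_power_aleph0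

/-- Any countable subset of `ℝ` is meagre. -/
lemma countable_isMeagre {s : Set ℝ} (hs : s.Countable) : IsMeagre s := by
  rw [isMeagre_iff_countable_union_isNowhereDense]
  refine ⟨(fun x => ({x} : Set ℝ)) '' s, ?_, hs.image _, ?_⟩
  · rintro t ⟨x, -, rfl⟩
    rw [IsNowhereDense, closure_singleton]
    exact interior_singleton x
  · intro x hx
    exact ⟨{x}, ⟨x, hx, rfl⟩, rfl⟩

/-- A countable union of nowhere dense sets is meagre. -/
lemma isMeagre_biUnion {ι : Type} {s : Set ι} (hs : s.Countable) {f : ι → Set ℝ}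
    (hf : ∀ i, IsNowhereDense (f i)) : IsMeagre (⋃ i ∈ s, f i) := by
  rw [isMeagre_iff_countable_union_isNowhereDense]
  refine ⟨f '' s, ?_, hs.image _, ?_⟩
  · rintro t ⟨i, -, rfl⟩; exact hf i
  · rw [Set.sUnion_image]

lemma exists_pick (A : Set ℝ) (hA : IsMeagre A) : ∃ x : ℝ, x ∉ A := by
  have hd : Dense Aᶜ := dense_of_mem_residual hA
  obtain ⟨x, hx⟩ := hd.nonempty
  exact ⟨x, hx⟩

variable (f : W → Set ℝ) (hf : ∀ a, IsClosed (f a) ∧ IsNowhereDense (f a))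

include hf in
lemma avoid_meagre (a : W) (g : Set.Iio a → ℝ) :
    IsMeagre ((⋃ b ∈ Set.Iic a, f b) ∪ Set.range g) := by
  have h1 : IsMeagre (⋃ b ∈ Set.Iic a, f b) :=
    isMeagre_biUnion (countable_Iic a) (fun i => (hf i).2)
  have h2 : IsMeagre (Set.range g) := by
    haveI : Countable (Set.Iio a) := (countable_Iio a).to_subtype
    exact countable_isMeagre (Set.countable_range g)
  rw [IsMeagre, Set.compl_union]
  exact Filter.inter_mem h1 h2

/-- The transfinite recursion picking points avoiding all earlier data. -/
def pick : W → ℝ :=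
  wellFounded_lt.fix fun a ih =>
    Classical.choose (exists_pick _ (avoid_meagre f hf a (fun b => ih b.1 b.2)))

lemma pick_spec (a : W) :
    pick f hf a ∉ (⋃ b ∈ Set.Iic a, f b) ∪
      Set.range (fun b : Set.Iio a => pick f hf b.1) := by
  have h := wellFounded_lt.fix_eq
    (F := fun (a : W) ih =>
      Classical.choose (exists_pick _ (avoid_meagre f hf a (fun b => ih b.1 b.2)))) a
  show (wellFounded_lt.fix fun a ih =>
      Classical.choose (exists_pick _ (avoid_meagre f hf a (fun b => ih b.1 b.2)))) a ∉ _
  rw [h]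
  exact Classical.choose_spec (exists_pick _ (avoid_meagre f hf a _))

lemma pick_not_mem {a b : W} (h : b ≤ a) : pick f hf a ∉ f b := by
  intro hmem
  exact pick_spec f hf a (Or.inl (Set.mem_biUnion h hmem))

lemma pick_ne {a b : W} (h : b < a) : pick f hf a ≠ pick f hf b := by
  intro heq
  exact pick_spec f hf a (Or.inr ⟨⟨b, h⟩, heq.symm⟩)

lemma pick_injective : Function.Injective (pick f hf) := by
  intro a b h
  rcases lt_trichotomy a b with hab | hab | hab
  · exact absurd h.symm (pick_ne f hf hab)
  · exact hab
  · exact absurd h (pick_ne f hf hab)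

end

end LuzinAux

/-- Under CH there is a Luzin set: an uncountable set of reals meeting
every meager set in a countable set. -/
theorem exists_luzin_set (hCH : Cardinal.continuum = Cardinal.aleph 1) :
    ∃ Λ : Set ℝ, ¬ Λ.Countable ∧
      ∀ M : Set ℝ, IsMeagre M → (Λ ∩ M).Countable := by
  classical
  have hCH0 : Cardinal.continuum.{0} = Cardinal.aleph.{0} 1 := by
    refine Cardinal.lift_injective ?_
    rw [Cardinal.lift_continuum, Cardinal.lift_aleph, Ordinal.lift_one]
    exact hCH
  set K : Set (Set ℝ) := {C | IsClosed C ∧ IsNowhereDense C} with hKdef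
  -- a surjection from W onto K
  have hKc : #K ≤ Cardinal.continuum := by
    calc #K ≤ #{C : Set ℝ // IsClosed C} := by
          apply Cardinal.mk_le_of_injective
            (f := fun C : K => (⟨(C : Set ℝ), C.2.1⟩ : {C : Set ℝ // IsClosed C}))
          intro C D h
          simp only [Subtype.mk.injEq] at h
          exact Subtype.ext h
      _ ≤ Cardinal.continuum := LuzinAux.mk_closed_le
  have hKle : #K ≤ #LuzinAux.W := by
    rw [hCH0] at hKc
    rw [LuzinAux.mk_W]
    exact hKc
  obtain ⟨g⟩ := (Cardinal.le_def _ _).1 hKle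
  let f : LuzinAux.W → Set ℝ := fun a =>
    if h : ∃ C : K, g C = a then ((Classical.choose h : ↥K) : Set ℝ) else ∅
  have hf : ∀ a, IsClosed (f a) ∧ IsNowhereDense (f a) := by
    intro a
    by_cases h : ∃ C : K, g C = a
    · simp only [f, dif_pos h]
      exact (Classical.choose h).2
    · simp only [f, dif_neg h]
      exact ⟨isClosed_empty, isNowhereDense_empty⟩
  have hsurj : ∀ C ∈ K, ∃ a, f a = C := by
    intro C hC
    refine ⟨g ⟨C, hC⟩, ?_⟩
    have h : ∃ C' : K, g C' = g ⟨C, hC⟩ := ⟨⟨C, hC⟩, rfl⟩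
    have heq : Classical.choose h = (⟨C, hC⟩ : K) := g.injective (Classical.choose_spec h)
    simp only [f, dif_pos h, heq]
  refine ⟨Set.range (LuzinAux.pick f hf), ?_, ?_⟩
  · intro hcount
    have h1 : #(Set.range (LuzinAux.pick f hf)) < Cardinal.aleph 1 :=
      (Cardinal.countable_iff_lt_aleph_one _).1 hcount
    rw [Cardinal.mk_range_eq _ (LuzinAux.pick_injective f hf), LuzinAux.mk_W] at h1
    exact lt_irrefl _ h1
  · intro M hM
    obtain ⟨S, hSnwd, hScount, hSsub⟩ :=
      isMeagre_iff_countable_union_isNowhereDense.1 hM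
    set S' : Set (Set ℝ) := insert ∅ (closure '' S) with hS'def
    have hS'count : S'.Countable := (hScount.image _).insert _
    have hS'ne : S'.Nonempty := ⟨∅, Set.mem_insert _ _⟩
    obtain ⟨h, hh⟩ := hS'count.exists_eq_range hS'ne
    have hhK : ∀ n, h n ∈ K := by
      intro n
      have : h n ∈ S' := hh ▸ Set.mem_range_self n
      rcases this with h0 | ⟨t, ht, hteq⟩
      · rw [h0]; exact ⟨isClosed_empty, isNowhereDense_empty⟩
      · rw [← hteq]; exact ⟨isClosed_closure, (hSnwd t ht).closure⟩
    choose a ha using fun n => hsurj (h n) (hhK n)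
    have hsub : Set.range (LuzinAux.pick f hf) ∩ M ⊆
        ⋃ n, LuzinAux.pick f hf '' Set.Iio (a n) := by
      rintro x ⟨⟨c, rfl⟩, hxM⟩
      have hxS : ∃ t ∈ S, LuzinAux.pick f hf c ∈ t := by
        obtain ⟨t, ht, hxt⟩ := hSsub hxM
        exact ⟨t, ht, hxt⟩
      obtain ⟨t, ht, hxt⟩ := hxS
      have hxcl : LuzinAux.pick f hf c ∈ closure t := subset_closure hxt
      have : closure t ∈ S' := Set.mem_insert_of_mem _ ⟨t, ht, rfl⟩
      rw [hh] at this
      obtain ⟨n, hn⟩ := this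
      have hxfn : LuzinAux.pick f hf c ∈ f (a n) := by rw [ha n, hn]; exact hxcl
      have hlt : c < a n := by
        by_contra hle
        push_neg at hle
        exact LuzinAux.pick_not_mem f hf hle hxfn
      exact Set.mem_iUnion.2 ⟨n, ⟨c, hlt, rfl⟩⟩
    exact Set.Countable.mono hsub
      (Set.countable_iUnion fun n => (LuzinAux.countable_Iio (a n)).image _)
end

section
/- Assuming the axiom of choice, there exists a Burstin basis: a ℚ-linear Hamel basis B of ℝ such that B ∩ P ≠ ∅ for every perfect set P ⊆ ℝ. -/
open Cardinal Set Metric Ordinal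

namespace BurstinAux

/-- The type of nonempty perfect subsets of `ℝ`. -/
abbrev PerfSet := {C : Set ℝ // Perfect C ∧ C.Nonempty}

/-- A nonempty perfect subset of `ℝ` has at least continuum many points. -/
lemma continuum_le_mk_perfect {C : Set ℝ} (hC : Perfect C) (hne : C.Nonempty) :
    𝔠 ≤ #C := by
  obtain ⟨f, hfC, -, hfinj⟩ := hC.exists_nat_bool_injection hne
  have h : #(ℕ → Bool) ≤ #C :=
    mk_le_of_injective (f := fun x => (⟨f x, hfC (mem_range_self x)⟩ : C))
      (fun a b hab => hfinj (congrArg Subtype.val hab))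
  rwa [show #(ℕ → Bool) = 𝔠 by
    rw [← Cardinal.power_def, Cardinal.mk_bool, Cardinal.mk_nat, Cardinal.two_power_aleph0]] at h

/-- There are at most continuum many nonempty perfect subsets of `ℝ`. -/
lemma mk_pset_le : #PerfSet ≤ 𝔠 := by
  have hinj : Function.Injective (fun i : PerfSet => fun q : ℚ => infDist (q : ℝ) i.1) := by
    rintro ⟨C, hC, hCne⟩ ⟨D, hD, hDne⟩ h
    have heq : (fun x : ℝ => infDist x C) = fun x : ℝ => infDist x D :=
      Rat.denseRange_cast.equalizer (continuous_infDist_pt C) (continuous_infDist_pt D)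
        (funext fun q => congrFun h q)
    have : C = D := by
      ext x
      rw [hC.closed.mem_iff_infDist_zero hCne, hD.closed.mem_iff_infDist_zero hDne,
        congrFun heq x]
    simp [this]
  calc #PerfSet ≤ #(ℚ → ℝ) := mk_le_of_injective hinj
    _ = 𝔠 := by rw [← Cardinal.power_def, Cardinal.mk_real, Cardinal.mkRat,
        Cardinal.continuum_power_aleph0]

/-- The `ℚ`-span of a set of reals has cardinality at most `max #s ℵ₀`. -/
lemma mk_span_rat_le (s : Set ℝ) : #(Submodule.span ℚ s : Set ℝ) ≤ max #s ℵ₀ := by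
  have hsub : (Submodule.span ℚ s : Set ℝ) ⊆ (Subfield.closure s : Set ℝ) := by
    intro x hx
    induction hx using Submodule.span_induction with
    | mem y hy => exact Subfield.subset_closure hy
    | zero => exact zero_mem _
    | add y z _ _ hy hz => exact add_mem hy hz
    | smul q y _ hy =>
      rw [Rat.smul_def]
      exact mul_mem (SubfieldClass.ratCast_mem _ q) hy
  exact (mk_le_mk_of_subset hsub).trans (Subfield.cardinalMk_closure_le_max s)

/-- Key step: a perfect set cannot be covered by the span of few elements. -/
lemma key (i : PerfSet) (s : Set ℝ) (hs : #s < 𝔠) :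
    ∃ x, x ∈ i.1 ∧ x ∉ Submodule.span ℚ s := by
  by_contra h
  push_neg at h
  have h1 : i.1 ⊆ (Submodule.span ℚ s : Set ℝ) := h
  have h2 : 𝔠 ≤ #(Submodule.span ℚ s : Set ℝ) :=
    (continuum_le_mk_perfect i.2.1 i.2.2).trans (mk_le_mk_of_subset h1)
  exact absurd (h2.trans (mk_span_rat_le s)) (not_le.2 (max_lt hs aleph0_lt_continuum))

variable (r : PerfSet → PerfSet → Prop) (wf : WellFounded r)
  (bnd : ∀ i : PerfSet, #{j : PerfSet // r j i} < 𝔠)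

/-- Body of the transfinite recursion. -/
noncomputable def body : ∀ i : PerfSet, (∀ j, r j i → ℝ) → ℝ := fun i ih =>
  (key i (Set.range fun j : {j : PerfSet // r j i} => ih j j.2)
    (Cardinal.mk_range_le.trans_lt (bnd i))).choose

/-- The transfinite recursion picking a point of each perfect set outside the span of
previously chosen points. -/
noncomputable def F : PerfSet → ℝ := wf.fix (body r bnd)

lemma F_spec (i : PerfSet) : F r wf bnd i ∈ i.1 ∧
    F r wf bnd i ∉ Submodule.span ℚ
      (Set.range fun j : {j : PerfSet // r j i} => F r wf bnd j) := by
  have h : F r wf bnd i = body r bnd i (fun j _ => F r wf bnd j) :=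
    WellFounded.fix_eq wf (body r bnd) i
  rw [h]
  exact (key i (Set.range fun j : {j : PerfSet // r j i} => F r wf bnd j)
    (Cardinal.mk_range_le.trans_lt (bnd i))).choose_spec

end BurstinAux

/-- (Burstin) There exists a Burstin basis: a Hamel basis of `ℝ` over `ℚ`
meeting every nonempty perfect set. -/
theorem exists_burstin_basis :
    ∃ B : Set ℝ, LinearIndependent ℚ ((↑) : B → ℝ) ∧
      Submodule.span ℚ B = ⊤ ∧
      ∀ P : Set ℝ, Perfect P → P.Nonempty → (B ∩ P).Nonempty := by
  classical
  open BurstinAux in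
  -- embed the perfect sets into the initial ordinal of the continuum
  obtain ⟨e⟩ : Nonempty (PerfSet ↪ Cardinal.continuum.ord.ToType) := by
    rw [← Cardinal.le_def, Cardinal.mk_ord_toType]
    exact mk_pset_le
  set r : PerfSet → PerfSet → Prop := fun a b => e a < e b with hr
  have wf : WellFounded r := InvImage.wf (fun i => e i) wellFounded_lt
  have bnd : ∀ i : PerfSet, #{j : PerfSet // r j i} < 𝔠 := by
    intro i
    have h1 : #{j : PerfSet // r j i} ≤ #(Set.Iio (e i)) :=
      mk_le_of_injective (f := fun j => ⟨e j.1, j.2⟩)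
        (fun a b hab => Subtype.ext (e.injective (congrArg Subtype.val hab)))
    exact h1.trans_lt (Cardinal.mk_Iio_toType_ord_lt (e i))
  set G : PerfSet → ℝ := F r wf bnd with hG
  have hGspec := F_spec r wf bnd
  rw [← hG] at hGspec
  -- linear independence of the chosen family
  have hli : LinearIndependent ℚ G := by
    rw [linearIndependent_iff]
    intro l hl
    by_contra hl0
    have hsupp : l.support.Nonempty := Finsupp.support_nonempty_iff.2 hl0
    obtain ⟨i, hi, hmax⟩ := l.support.exists_max_image (fun j => e j) hsupp
    have hli0 : l i ≠ 0 := Finsupp.mem_support_iff.mp hi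
    have hsum : ∑ j ∈ l.support, l j • G j = 0 := by
      rwa [Finsupp.linearCombination_apply, Finsupp.sum] at hl
    rw [← Finset.add_sum_erase _ (fun j => l j • G j) hi] at hsum
    have hmem : ∑ j ∈ l.support.erase i, l j • G j ∈
        Submodule.span ℚ (Set.range fun j : {j : PerfSet // r j i} => G j) := by
      refine Submodule.sum_mem _ (fun j hj => Submodule.smul_mem _ _ (Submodule.subset_span ?_))
      have hne : e j ≠ e i := fun hcon =>
        Finset.ne_of_mem_erase hj (e.injective hcon)
      exact ⟨⟨j, lt_of_le_of_ne (hmax j (Finset.mem_of_mem_erase hj)) hne⟩, rfl⟩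
    have hGi : G i = (l i)⁻¹ • (-(∑ j ∈ l.support.erase i, l j • G j)) := by
      rw [← eq_neg_of_add_eq_zero_left hsum, smul_smul, inv_mul_cancel₀ hli0, one_smul]
    exact (hGspec i).2 (hGi ▸ Submodule.smul_mem _ _ (Submodule.neg_mem _ hmem))
  have hli' : LinearIndepOn ℚ id (Set.range G) := (linearIndepOn_id_range_iff hli.injective).mpr hli
  refine ⟨hli'.extend (Set.subset_univ _), hli'.linearIndepOn_extend _, ?_, ?_⟩
  · refine le_antisymm le_top ?_
    rw [← Submodule.span_univ]
    exact Submodule.span_le.2 (hli'.subset_span_extend (Set.subset_univ _))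
  · intro P hP hne
    exact ⟨G ⟨P, hP, hne⟩, hli'.subset_extend _ ⟨⟨P, hP, hne⟩, rfl⟩,
      (hGspec ⟨P, hP, hne⟩).1⟩
end

section
/- Let V₀ ⊆ V₁, V₂ be models of ZFC with V₁ ∩ V₂ = V₀ (as sets of reals), let p ⊆ ℝ be ℚ-linearly independent with p ∈ V₀ such that p spans ℝ^{V₀} over ℚ, and let p₀ ∈ V₁, p₁ ∈ V₂ be ℚ-linearly independent sets with p ⊆ p₀ and p ⊆ p₁. Then p₀ ∪ p₁ is ℚ-linearly independent. -/
/-- Mutual genericity gives linear independence of unions: if `V₀ = V₁ ∩ V₂`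
(as `ℚ`-subspaces of reals), `p ⊆ V₀` is linearly independent and spans `V₀`,
and `p₀ ⊆ V₁`, `p₁ ⊆ V₂` are linearly independent sets extending `p`, then
`p₀ ∪ p₁` is linearly independent. -/
theorem union_linearIndependent_of_mutually_generic
    (V₀ V₁ V₂ : Submodule ℚ ℝ) (hV : (V₁ : Set ℝ) ∩ (V₂ : Set ℝ) = (V₀ : Set ℝ))
    (p p₀ p₁ : Set ℝ)
    (hpV : p ⊆ (V₀ : Set ℝ))
    (hp_ind : LinearIndependent ℚ ((↑) : p → ℝ))
    (hp_span : Submodule.span ℚ p = V₀)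
    (hp₀V : p₀ ⊆ (V₁ : Set ℝ)) (hp₁V : p₁ ⊆ (V₂ : Set ℝ))
    (hpp₀ : p ⊆ p₀) (hpp₁ : p ⊆ p₁)
    (hp₀ : LinearIndependent ℚ ((↑) : p₀ → ℝ))
    (hp₁ : LinearIndependent ℚ ((↑) : p₁ → ℝ)) :
    LinearIndependent ℚ ((↑) : ↥(p₀ ∪ p₁) → ℝ) := by
  have hunion : p₀ ∪ p₁ = p₀ ∪ (p₁ \ p) := by
    ext x
    constructor
    · rintro (h | h)
      · exact Or.inl h
      · by_cases hx : x ∈ p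
        · exact Or.inl (hpp₀ hx)
        · exact Or.inr ⟨h, hx⟩
    · rintro (h | h)
      · exact Or.inl h
      · exact Or.inr h.1
  rw [hunion]
  -- disjointness of spans of p and p₁ \ p, inside p₁
  have hkey : Disjoint (Submodule.span ℚ p) (Submodule.span ℚ (p₁ \ p)) := by
    have hdisj : Disjoint ((↑) ⁻¹' p : Set p₁) ((↑) ⁻¹' (p₁ \ p)) :=
      (Set.disjoint_sdiff_right : Disjoint p (p₁ \ p)).preimage _
    have := hp₁.disjoint_span_image hdisj
    have h1 : ((↑) : p₁ → ℝ) '' ((↑) ⁻¹' p) = p := by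
      rw [Subtype.image_preimage_coe]
      exact Set.inter_eq_right.mpr hpp₁
    have h2 : ((↑) : p₁ → ℝ) '' ((↑) ⁻¹' (p₁ \ p)) = p₁ \ p := by
      rw [Subtype.image_preimage_coe]
      exact Set.inter_eq_right.mpr Set.diff_subset
    rwa [h1, h2] at this
  refine LinearIndepOn.id_union (s := p₀) (t := p₁ \ p) hp₀ (LinearIndepOn.mono (s := p₁) hp₁ Set.diff_subset) ?_
  rw [Submodule.disjoint_def]
  intro x hx0 hx1
  have hxV₁ : x ∈ V₁ := (Submodule.span_le.mpr hp₀V) hx0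
  have hxV₂ : x ∈ V₂ :=
    (Submodule.span_le.mpr hp₁V) (Submodule.span_mono Set.diff_subset hx1)
  have hxV₀ : x ∈ V₀ := by
    have : x ∈ (V₁ : Set ℝ) ∩ (V₂ : Set ℝ) := ⟨hxV₁, hxV₂⟩
    rwa [hV] at this
  rw [← hp_span] at hxV₀
  exact Submodule.disjoint_def.mp hkey x hxV₀ hx1
end

section
/- There exists a Hamel basis H of ℝ over ℚ and a perfect set P such that H ∩ P = ∅; consequently not every Hamel basis is a Burstin basis. -/
open Set Filter

lemma perfect_Icc01 : Perfect (Set.Icc (1:ℝ) 2) := by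
  constructor
  · exact isClosed_Icc
  · rw [preperfect_iff_nhds]
    intro x hx U hU
    rcases Metric.mem_nhds_iff.mp hU with ⟨ε, hε, hball⟩
    rcases lt_or_eq_of_le hx.2 with h2 | h2
    · -- x < 2, take y slightly above x
      set δ := min (ε/2) ((2 - x)/2) with hδ
      have hδpos : 0 < δ := lt_min (by linarith) (by linarith)
      refine ⟨x + δ, ⟨hball ?_, ?_, ?_⟩, by linarith⟩
      · simp only [Metric.mem_ball, Real.dist_eq]
        rw [abs_of_nonneg (by linarith)]
        have : δ ≤ ε/2 := min_le_left _ _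
        linarith
      · linarith [hx.1]
      · have : δ ≤ (2 - x)/2 := min_le_right _ _
        linarith
    · -- x = 2, take y slightly below
      set δ := min (ε/2) ((1:ℝ)/2) with hδ
      have hδpos : 0 < δ := lt_min (by linarith) (by norm_num)
      refine ⟨x - δ, ⟨hball ?_, ?_, ?_⟩, by linarith⟩
      · simp only [Metric.mem_ball, Real.dist_eq]
        rw [abs_of_nonpos (by linarith)]
        have : δ ≤ ε/2 := min_le_left _ _
        linarith
      · have : δ ≤ (1:ℝ)/2 := min_le_right _ _
        linarith
      · linarith

lemma span_compl_Icc : Submodule.span ℚ ((Set.Icc (1:ℝ) 2)ᶜ) = ⊤ := by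
  rw [eq_top_iff]
  rintro x -
  by_cases hx : x ∈ Set.Icc (1:ℝ) 2
  · have hx4 : x/4 ∈ (Set.Icc (1:ℝ) 2)ᶜ := by
      simp only [mem_compl_iff, mem_Icc, not_and, not_le]
      intro h; rcases hx with ⟨h1, h2⟩; linarith
    have : x = (4:ℚ) • (x/4) := by rw [Rat.smul_def]; push_cast; ring
    rw [this]
    exact Submodule.smul_mem _ _ (Submodule.subset_span hx4)
  · exact Submodule.subset_span hx

/-- There is a Hamel basis of `ℝ` over `ℚ` missing some nonempty perfect set;
hence not every Hamel basis is a Burstin basis. -/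
theorem exists_hamel_basis_missing_perfect_set :
    ∃ H : Set ℝ, LinearIndependent ℚ ((↑) : H → ℝ) ∧
      Submodule.span ℚ H = ⊤ ∧
      ∃ P : Set ℝ, Perfect P ∧ P.Nonempty ∧ H ∩ P = ∅ := by
  obtain ⟨b, hbt, -, htb, hli⟩ :=
    exists_linearIndepOn_id_extension (linearIndepOn_empty ℚ (id : ℝ → ℝ))
      (Set.empty_subset ((Set.Icc (1:ℝ) 2)ᶜ))
  refine ⟨b, hli, ?_, Set.Icc 1 2, perfect_Icc01, ⟨1, by norm_num⟩, ?_⟩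
  · rw [eq_top_iff, ← span_compl_Icc]
    exact Submodule.span_le.mpr htb
  · rw [Set.eq_empty_iff_forall_notMem]
    rintro x ⟨hxb, hxP⟩
    exact hbt hxb hxP
end
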